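/- arXiv:1605.06530 — 2 statements merged into one kernel-verified Lean document; each statement's English description precedes it below -/
import Mathlib

section
/- Let G be a finite connected weighted graph and let (τ_{ij}) be its coalescence times. Then τ^{(2)} + τ^{(3)} ≥ τ^{(1)}, with equality if and only if G has exactly two vertices and no self-loops. -/
open Finset Filter Asymptotics

noncomputable section

namespace EvoGraph

variable {V : Type*} [Fintype V] [DecidableEq V]

/-- Weighted degree `w_i = ∑_j w_{ij}`. -/
def deg (w : V → V → ℝ) (i : V) : ℝ := ∑ j, w i j

/-- Total edge weight `W = ∑_i w_i`. -/
def Wtot (w : V → V → ℝ) : ℝ := ∑ i, deg w i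

/-- Random-walk step probability `p_{ij} = w_{ij}/w_i`. -/
def step (w : V → V → ℝ) (i j : V) : ℝ := w i j / deg w i

/-- The stochastic matrix `(p_{ij})`. -/
def stepMat (w : V → V → ℝ) : Matrix V V ℝ := Matrix.of fun i j => step w i j

/-- `n`-step probability `p^{(n)}_{ij}`: the `(i,j)` entry of the `n`-th power of `(p_{ij})`. -/
def stepN (w : V → V → ℝ) (n : ℕ) (i j : V) : ℝ := (stepMat w ^ n) i j

/-- Stationary distribution `π_i = w_i / W`. -/
def statDist (w : V → V → ℝ) (i : V) : ℝ := deg w i / Wtot w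

/-- `w` is a finite connected weighted graph: symmetric nonnegative weights
(self-loops allowed), positive weighted degrees, and any two vertices joined by
a path of edges of positive weight. -/
def IsWeightedGraph (w : V → V → ℝ) : Prop :=
  (∀ i j, w i j = w j i) ∧ (∀ i j, 0 ≤ w i j) ∧ (∀ i, 0 < deg w i) ∧
  ∀ i j : V, Relation.ReflTransGen (fun a b => 0 < w a b) i j

/-- `τ` is the (symmetric) solution of the coalescence-time system:
`τ_{ii} = 0`, and `τ_{ij} = 1 + (1/2) ∑_k (p_{ik} τ_{kj} + p_{jk} τ_{ik})` for `i ≠ j`. -/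
def IsCoalescent (w : V → V → ℝ) (τ : V → V → ℝ) : Prop :=
  (∀ i j, τ i j = τ j i) ∧ (∀ i, τ i i = 0) ∧
  ∀ i j, i ≠ j →
    τ i j = 1 + (1 / 2) * ∑ k, (step w i k * τ k j + step w j k * τ i k)

/-- `τ^{(n)} = ∑_{i,j} π_i p^{(n)}_{ij} τ_{ij}`. -/
def tauWalk (w τ : V → V → ℝ) (n : ℕ) : ℝ :=
  ∑ i, ∑ j, statDist w i * stepN w n i j * τ i j

/-- Remeeting time `τ⁺_i = 1 + ∑_j p_{ij} τ_{ij}`. -/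
def remeet (w τ : V → V → ℝ) (i : V) : ℝ := 1 + ∑ j, step w i j * τ i j

/-!
Write `P` for the step matrix and `τ^R = ∑_{i,j} π_i R_ij τ_ij`. Averaging the coalescence equations
against `π_i R_ij`, for any `π`-reversible `R` with unit row sums, gives the recursion
`τ^{RP} = τ^R - 1 + ∑_i π_i R_ii τ⁺_i`. Taking `R = I, P, P²` expresses `τ^{(1)}, τ^{(2)}, τ^{(3)}`
through diagonal averages of `τ⁺`, and taking `R = 𝟙πᵀ`, which `P` fixes, gives `∑_i π_i² τ⁺_i = 1`.
Together with the reversibility identity `π_i ((I+P)²)_ii - 4π_i² = ∑_k π_k ((I+P)_ki - 2π_i)²` this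
yields `τ^{(2)} + τ^{(3)} - τ^{(1)} = ∑_i τ⁺_i ∑_k π_k ((I+P)_ki - 2π_i)² ≥ 0`. Equality forces
`I + P = 2·𝟙πᵀ`, whose trace gives `N + ∑_i p_ii = 2`: so `N = 2` and there are no self-loops.
-/

open scoped Matrix

section Matrix

variable {π : V → ℝ} {R : Matrix V V ℝ}

def IsReversible (π : V → ℝ) (R : Matrix V V ℝ) : Prop :=
  (Matrix.diagonal π * R).IsSymm

theorem isReversible_iff : IsReversible π R ↔ ∀ i j, π i * R i j = π j * R j i := by
  simp only [IsReversible, Matrix.IsSymm.ext_iff, Matrix.diagonal_mul]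
  exact ⟨fun h i j => (h i j).symm, fun h i j => (h i j).symm⟩

theorem IsReversible.apply (h : IsReversible π R) (i j : V) :
    π i * R i j = π j * R j i :=
  isReversible_iff.1 h i j

theorem IsReversible.pow (h : IsReversible π R) (n : ℕ) : IsReversible π (R ^ n) := by
  set D := Matrix.diagonal π
  have hD : Dᵀ = D := Matrix.diagonal_transpose π
  induction n with
  | zero => simp [IsReversible, Matrix.isSymm_diagonal]
  | succ n ih =>
    calc (D * R ^ (n + 1))ᵀ = Rᵀ * (D * R ^ n)ᵀ := by
          rw [pow_succ, ← Matrix.mul_assoc, Matrix.transpose_mul]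
      _ = (D * R)ᵀ * R ^ n := by
          rw [ih.eq, Matrix.transpose_mul, hD, Matrix.mul_assoc]
      _ = D * R ^ (n + 1) := by
          rw [h.eq, Matrix.mul_assoc, ← pow_succ']

theorem IsReversible.one_add (h : IsReversible π R) : IsReversible π (1 + R) := by
  unfold IsReversible
  rw [Matrix.mul_add, Matrix.mul_one]
  exact (Matrix.isSymm_diagonal π).add h

theorem isReversible_const_row (π : V → ℝ) : IsReversible π (Matrix.of fun _ => π) :=
  isReversible_iff.2 fun _ _ => mul_comm _ _

theorem IsReversible.sum_mul_apply (h : IsReversible π R) (hrow : ∀ i, ∑ j, R i j = 1)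
    (j : V) : ∑ i, π i * R i j = π j := by
  simp_rw [h.apply, ← Finset.mul_sum, hrow, mul_one]

theorem IsReversible.sum_sum_swap (h : IsReversible π R) (g : V → V → ℝ) :
    ∑ i, ∑ j, π i * R i j * g i j = ∑ i, ∑ j, π i * R i j * g j i := by
  calc ∑ i, ∑ j, π i * R i j * g i j = ∑ i, ∑ j, π j * R j i * g i j :=
        Finset.sum_congr rfl fun i _ => Finset.sum_congr rfl fun j _ => by rw [h.apply]
    _ = ∑ i, ∑ j, π i * R i j * g j i := Finset.sum_comm

theorem sum_pow_apply_eq_one (hrow : ∀ i, ∑ j, R i j = 1) (n : ℕ) (i : V) :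
    ∑ j, (R ^ n) i j = 1 := by
  have hrow' : R *ᵥ 1 = 1 := funext fun i => by simp [Matrix.mulVec, dotProduct, hrow]
  have : R ^ n *ᵥ 1 = 1 := by
    induction n with
    | zero => simp
    | succ n ih => rw [pow_succ, ← Matrix.mulVec_mulVec, hrow', ih]
  simpa [Matrix.mulVec, dotProduct] using congrFun this i

theorem IsReversible.sum_mul_sub_sq (h : IsReversible π R) {c : ℝ}
    (hrow : ∀ i, ∑ k, R i k = c) (hπ : ∑ i, π i = 1) (i : V) :
    ∑ k, π k * (R k i - c * π i) ^ 2 = π i * (R * R) i i - c ^ 2 * π i ^ 2 := by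
  have hterm : ∀ k, π k * (R k i - c * π i) ^ 2
      = π i * (R i k * R k i) - 2 * c * π i * (π i * R i k) + c ^ 2 * π i ^ 2 * π k := by
    intro k
    linear_combination (R k i - 2 * c * π i) * h.apply k i
  simp_rw [hterm, Finset.sum_add_distrib, Finset.sum_sub_distrib, ← Finset.mul_sum,
    ← Matrix.mul_apply, hrow, hπ]
  ring

end Matrix

def pairMean (π : V → ℝ) (R : Matrix V V ℝ) (τ : V → V → ℝ) : ℝ :=
  ∑ i, ∑ j, π i * R i j * τ i j

theorem tauWalk_eq_pairMean (w τ : V → V → ℝ) (n : ℕ) :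
    tauWalk w τ n = pairMean (statDist w) (stepMat w ^ n) τ :=
  rfl

section Walk

variable {ι : Type*} [Fintype ι] {w τ : ι → ι → ℝ}

theorem sum_step (hdeg : ∀ i, 0 < deg w i) (i : ι) : ∑ j, step w i j = 1 := by
  simp only [step]
  rw [← Finset.sum_div]
  exact div_self (hdeg i).ne'

theorem step_nonneg (hnn : ∀ i j, 0 ≤ w i j) (hdeg : ∀ i, 0 < deg w i) (i j : ι) :
    0 ≤ step w i j :=
  div_nonneg (hnn i j) (hdeg i).le

theorem Wtot_pos [Nonempty ι] (hdeg : ∀ i, 0 < deg w i) : 0 < Wtot w :=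
  Finset.sum_pos (fun i _ => hdeg i) Finset.univ_nonempty

theorem statDist_pos [Nonempty ι] (hdeg : ∀ i, 0 < deg w i) (i : ι) : 0 < statDist w i :=
  div_pos (hdeg i) (Wtot_pos hdeg)

theorem sum_statDist [Nonempty ι] (hdeg : ∀ i, 0 < deg w i) : ∑ i, statDist w i = 1 := by
  simp only [statDist]
  rw [← Finset.sum_div]
  exact div_self (Wtot_pos hdeg).ne'

theorem IsCoalescent.nonneg (hτ : IsCoalescent w τ) (hnn : ∀ i j, 0 ≤ w i j)
    (hdeg : ∀ i, 0 < deg w i) (i j : ι) : 0 ≤ τ i j := by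
  obtain ⟨⟨a, b⟩, -, hmin⟩ := Finset.exists_min_image Finset.univ
    (fun p : ι × ι => τ p.1 p.2) ⟨(i, j), Finset.mem_univ _⟩
  have hmin' : ∀ k l, τ a b ≤ τ k l := fun k l => hmin (k, l) (Finset.mem_univ _)
  suffices 0 ≤ τ a b from this.trans (hmin' i j)
  by_cases hab : a = b
  · rw [hab, hτ.2.1]
  · have hle : ∑ k, (step w a k * τ a b + step w b k * τ a b)
        ≤ ∑ k, (step w a k * τ k b + step w b k * τ a k) :=
      Finset.sum_le_sum fun k _ => add_le_add
        (mul_le_mul_of_nonneg_left (hmin' k b) (step_nonneg hnn hdeg a k))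
        (mul_le_mul_of_nonneg_left (hmin' a k) (step_nonneg hnn hdeg b k))
    rw [Finset.sum_add_distrib, ← Finset.sum_mul, ← Finset.sum_mul, sum_step hdeg,
      sum_step hdeg] at hle
    linarith [hτ.2.2 a b hab]

theorem IsCoalescent.remeet_pos (hτ : IsCoalescent w τ) (hnn : ∀ i j, 0 ≤ w i j)
    (hdeg : ∀ i, 0 < deg w i) (i : ι) : 0 < remeet w τ i := by
  have : 0 ≤ ∑ j, step w i j * τ i j := Finset.sum_nonneg fun j _ =>
    mul_nonneg (step_nonneg hnn hdeg i j) (hτ.nonneg hnn hdeg i j)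
  rw [remeet]
  linarith

end Walk

theorem isReversible_stepMat {w : V → V → ℝ} (hsym : ∀ i j, w i j = w j i)
    (hdeg : ∀ i, 0 < deg w i) : IsReversible (statDist w) (stepMat w) := by
  refine isReversible_iff.2 fun i j => ?_
  have hi := (hdeg i).ne'
  have hj := (hdeg j).ne'
  simp only [stepMat, Matrix.of_apply, statDist, step, hsym i j]
  field_simp

section Coalescence

variable {w τ : V → V → ℝ}

theorem IsCoalescent.sum_step_mul_add (hτ : IsCoalescent w τ) (i j : V) :
    ∑ k, (step w i k * τ k j + step w j k * τ i k)
      = 2 * τ i j - 2 + if i = j then 2 * remeet w τ i else 0 := by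
  obtain ⟨hsymm, hdiag, hrec⟩ := hτ
  by_cases hij : i = j
  · subst hij
    have hterm : ∀ k, step w i k * τ k i + step w i k * τ i k = 2 * (step w i k * τ i k) :=
      fun k => by rw [hsymm k i]; ring
    rw [if_pos rfl, Finset.sum_congr rfl fun k _ => hterm k, ← Finset.mul_sum, remeet, hdiag]
    ring
  · rw [if_neg hij, hrec i j hij]
    ring

theorem IsCoalescent.pairMean_mul_stepMat (hτ : IsCoalescent w τ) {π : V → ℝ}
    (hπ : ∑ i, π i = 1) {R : Matrix V V ℝ} (hR : IsReversible π R)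
    (hrow : ∀ i, ∑ j, R i j = 1) :
    pairMean π (R * stepMat w) τ
      = pairMean π R τ - 1 + ∑ i, π i * R i i * remeet w τ i := by
  set g : V → V → ℝ := fun i j => ∑ k, step w j k * τ i k
  have hA : pairMean π (R * stepMat w) τ = ∑ i, ∑ j, π i * R i j * g i j := by
    refine Finset.sum_congr rfl fun i _ => ?_
    simp_rw [g, Matrix.mul_apply, stepMat, Matrix.of_apply, Finset.mul_sum, Finset.sum_mul]
    rw [Finset.sum_comm]
    exact Finset.sum_congr rfl fun _ _ => Finset.sum_congr rfl fun _ _ => by ring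
  have hg : ∀ i j, g j i + g i j = 2 * τ i j - 2 + if i = j then 2 * remeet w τ i else 0 := by
    intro i j
    simp_rw [g, ← hτ.sum_step_mul_add i j, ← Finset.sum_add_distrib, hτ.1 j]
  have hsum : ∑ i, ∑ j, π i * R i j * (g j i + g i j)
      = 2 * pairMean π R τ - 2 + 2 * ∑ i, π i * R i i * remeet w τ i := by
    simp_rw [hg, mul_add, mul_sub, mul_ite, mul_zero, Finset.sum_add_distrib,
      Finset.sum_sub_distrib, Finset.sum_ite_eq, Finset.mem_univ, if_true]
    have htwo : ∑ i, ∑ j, π i * R i j * 2 = 2 := by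
      simp_rw [← Finset.sum_mul, ← Finset.mul_sum, hrow, mul_one, hπ, one_mul]
    simp only [htwo, pairMean, Finset.mul_sum]
    ring_nf
  -- reversibility of `R` and symmetry of `τ` make the two halves of the equation equal on average
  have hswap := hR.sum_sum_swap g
  simp_rw [mul_add, Finset.sum_add_distrib] at hsum
  linarith

theorem IsCoalescent.tauWalk_zero (hτ : IsCoalescent w τ) : tauWalk w τ 0 = 0 := by
  simp [tauWalk, stepN, Matrix.one_apply, hτ.2.1]

theorem IsCoalescent.tauWalk_succ [Nonempty V] (hτ : IsCoalescent w τ)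
    (hsym : ∀ i j, w i j = w j i) (hdeg : ∀ i, 0 < deg w i) (n : ℕ) :
    tauWalk w τ (n + 1)
      = tauWalk w τ n - 1 + ∑ i, statDist w i * (stepMat w ^ n) i i * remeet w τ i := by
  rw [tauWalk_eq_pairMean, tauWalk_eq_pairMean, pow_succ]
  exact hτ.pairMean_mul_stepMat (sum_statDist hdeg) ((isReversible_stepMat hsym hdeg).pow n)
    (sum_pow_apply_eq_one (sum_step hdeg) n)

theorem IsCoalescent.sum_statDist_mul_self_mul_remeet [Nonempty V] (hτ : IsCoalescent w τ)
    (hsym : ∀ i j, w i j = w j i) (hdeg : ∀ i, 0 < deg w i) :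
    ∑ i, statDist w i * statDist w i * remeet w τ i = 1 := by
  set Q : Matrix V V ℝ := Matrix.of fun _ => statDist w
  have hstat : Q * stepMat w = Q := by
    ext i j
    exact (isReversible_stepMat hsym hdeg).sum_mul_apply (sum_step hdeg) j
  have := hτ.pairMean_mul_stepMat (sum_statDist hdeg) (isReversible_const_row (statDist w))
    fun _ => sum_statDist hdeg
  rw [hstat] at this
  simp only [Q, Matrix.of_apply] at this
  linarith

theorem IsCoalescent.tauWalk_two_add_three_sub_one [Nonempty V] (hτ : IsCoalescent w τ)
    (hsym : ∀ i j, w i j = w j i) (hdeg : ∀ i, 0 < deg w i) :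
    tauWalk w τ 2 + tauWalk w τ 3 - tauWalk w τ 1
      = ∑ i, remeet w τ i
          * ∑ k, statDist w k * ((1 + stepMat w) k i - 2 * statDist w i) ^ 2 := by
  set π := statDist w
  set P := stepMat w
  set r := remeet w τ
  have h1 : tauWalk w τ 1 = _ := hτ.tauWalk_succ hsym hdeg 0
  have h2 : tauWalk w τ 2 = _ := hτ.tauWalk_succ hsym hdeg 1
  have h3 : tauWalk w τ 3 = _ := hτ.tauWalk_succ hsym hdeg 2
  have hkac := hτ.sum_statDist_mul_self_mul_remeet hsym hdeg
  have hrow : ∀ i, ∑ k, (1 + P) i k = 2 := fun i => by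
    simp only [Matrix.add_apply, Finset.sum_add_distrib, Matrix.one_apply, Finset.sum_ite_eq,
      Finset.mem_univ, if_true, P, stepMat, Matrix.of_apply, sum_step hdeg]
    norm_num
  have hsq : ∀ i, r i * ∑ k, π k * ((1 + P) k i - 2 * π i) ^ 2
      = π i * (P ^ 0) i i * r i + 2 * (π i * (P ^ 1) i i * r i) + π i * (P ^ 2) i i * r i
        - 4 * (π i * π i * r i) := fun i => by
    rw [(isReversible_stepMat hsym hdeg).one_add.sum_mul_sub_sq hrow (sum_statDist hdeg) i]
    simp only [Matrix.add_mul, Matrix.mul_add, Matrix.one_mul, Matrix.mul_one, pow_two,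
      pow_zero, pow_one, Matrix.add_apply, Matrix.one_apply_eq]
    ring
  rw [Finset.sum_congr rfl fun i _ => hsq i]
  simp only [Finset.sum_add_distrib, Finset.sum_sub_distrib, ← Finset.mul_sum]
  rw [hτ.tauWalk_zero] at h1
  linarith

end Coalescence

theorem sum_mul_sum_mul_sq_eq_zero_iff {ι : Type*} [Fintype ι] {a b : ι → ℝ}
    (ha : ∀ i, 0 < a i) (hb : ∀ k, 0 < b k) (x : ι → ι → ℝ) :
    ∑ i, a i * ∑ k, b k * x k i ^ 2 = 0 ↔ ∀ k i, x k i = 0 := by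
  have hinner : ∀ i, 0 ≤ ∑ k, b k * x k i ^ 2 := fun i =>
    Finset.sum_nonneg fun k _ => mul_nonneg (hb k).le (sq_nonneg _)
  constructor
  · intro h k i
    have hi := (Finset.sum_eq_zero_iff_of_nonneg fun i _ => mul_nonneg (ha i).le (hinner i)).1
      h i (Finset.mem_univ _)
    have hki := (Finset.sum_eq_zero_iff_of_nonneg fun k _ => mul_nonneg (hb k).le
      (sq_nonneg (x k i))).1 ((mul_eq_zero.1 hi).resolve_left (ha i).ne') k (Finset.mem_univ _)
    exact pow_eq_zero_iff two_ne_zero |>.1 ((mul_eq_zero.1 hki).resolve_left (hb k).ne')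
  · intro h
    simp [h]

section TwoVertices

variable {w : V → V → ℝ}

theorem card_eq_two_of_one_add_stepMat_eq (hnn : ∀ i j, 0 ≤ w i j)
    (hdeg : ∀ i, 0 < deg w i) (hN : 2 ≤ Fintype.card V)
    (h : ∀ i, (1 + stepMat w) i i = 2 * statDist w i) :
    Fintype.card V = 2 ∧ ∀ i, w i i = 0 := by
  have : Nonempty V := Fintype.card_pos_iff.mp (by omega)
  have htrace : (Fintype.card V : ℝ) + ∑ i, step w i i = 2 := by
    have := Finset.sum_congr rfl fun i (_ : i ∈ Finset.univ) => h i
    simp only [Matrix.add_apply, Matrix.one_apply_eq, stepMat, Matrix.of_apply,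
      Finset.sum_add_distrib, ← Finset.mul_sum, sum_statDist hdeg] at this
    simpa using this
  have hloops : 0 ≤ ∑ i, step w i i :=
    Finset.sum_nonneg fun i _ => step_nonneg hnn hdeg i i
  have hcard : Fintype.card V = 2 := by
    have : (Fintype.card V : ℝ) ≤ 2 := by linarith
    have : Fintype.card V ≤ 2 := by exact_mod_cast this
    omega
  refine ⟨hcard, fun i => ?_⟩
  rw [hcard, Nat.cast_ofNat, add_eq_left] at htrace
  have := (Finset.sum_eq_zero_iff_of_nonneg fun i _ => step_nonneg hnn hdeg i i).1
    htrace i (Finset.mem_univ _)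
  exact (div_eq_zero_iff.1 this).resolve_right (hdeg i).ne'

theorem one_add_stepMat_eq_of_card_eq_two (hsym : ∀ i j, w i j = w j i)
    (hdeg : ∀ i, 0 < deg w i) (hcard : Fintype.card V = 2) (hloop : ∀ i, w i i = 0)
    (k i : V) : (1 + stepMat w) k i = 2 * statDist w i := by
  have hpair : ∀ a b : V, a ≠ b → ∀ f : V → ℝ, ∑ j, f j = f a + f b := fun a b hab f => by
    rw [← Finset.sum_pair hab,
      Finset.eq_univ_of_card {a, b} (by rw [Finset.card_pair hab, hcard])]
  have hdeg_eq : ∀ a b, a ≠ b → deg w a = w a b := fun a b hab => by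
    rw [deg, hpair a b hab, hloop, zero_add]
  have hhalf : statDist w i = 1 / 2 := by
    obtain ⟨b, hbi⟩ := Fintype.exists_ne_of_one_lt_card (by omega) i
    have hib := (hdeg i).ne'
    rw [hdeg_eq i b hbi.symm] at hib
    rw [statDist, Wtot, hpair i b hbi.symm, hdeg_eq i b hbi.symm, hdeg_eq b i hbi, hsym b i]
    field_simp
    ring
  rw [Matrix.add_apply, hhalf, stepMat, Matrix.of_apply, step]
  by_cases hki : k = i
  · rw [hki, Matrix.one_apply_eq, hloop, zero_div]
    norm_num
  · rw [Matrix.one_apply_ne hki, ← hdeg_eq k i hki, div_self (hdeg k).ne']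
    norm_num

end TwoVertices

/-- `τ^{(2)} + τ^{(3)} ≥ τ^{(1)}`, with equality iff `G` has
exactly two vertices and no self-loops. -/
theorem tau2_add_tau3_ge_tau1 (w : V → V → ℝ) (hG : IsWeightedGraph w)
    (hN : 2 ≤ Fintype.card V) (τ : V → V → ℝ) (hτ : IsCoalescent w τ) :
    tauWalk w τ 2 + tauWalk w τ 3 ≥ tauWalk w τ 1 ∧
    (tauWalk w τ 2 + tauWalk w τ 3 = tauWalk w τ 1 ↔
      Fintype.card V = 2 ∧ ∀ i, w i i = 0) := by
  obtain ⟨hsym, hnn, hdeg, -⟩ := hG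
  have : Nonempty V := Fintype.card_pos_iff.mp (by omega)
  have hdef := hτ.tauWalk_two_add_three_sub_one hsym hdeg
  have hr := hτ.remeet_pos hnn hdeg
  have hπ := statDist_pos hdeg
  constructor
  · have : 0 ≤ tauWalk w τ 2 + tauWalk w τ 3 - tauWalk w τ 1 := hdef ▸
      Finset.sum_nonneg fun i _ => mul_nonneg (hr i).le
        (Finset.sum_nonneg fun k _ => mul_nonneg (hπ k).le (sq_nonneg _))
    linarith
  · rw [← sub_eq_zero, hdef, sum_mul_sum_mul_sq_eq_zero_iff hr hπ]
    simp only [sub_eq_zero]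
    exact ⟨fun h => card_eq_two_of_one_add_stepMat_eq hnn hdeg hN fun i => h i i,
      fun ⟨hcard, hloop⟩ => one_add_stepMat_eq_of_card_eq_two hsym hdeg hcard hloop⟩

end EvoGraph
end
end

section
/- Let G be the wheel graph with n ≥ 3 leaves: the vertices are a hub H and leaves indexed by Z/nZ, each leaf is joined to the hub and to its two cyclically adjacent leaves by weight-1 edges, and all other weights are zero. Let γ = (3 − √5)/2 and set B = 18n(1 − γ) / (3(1 + γ)(1 − γⁿ) + n(1 + γⁿ)(1 − γ)). Then the coalescence times of G satisfy: (i) for any leaf ℓ, τ_{ℓH} = B(1 + γⁿ) − 3; and (ii) for any two leaves at cyclic distance j with 0 ≤ j ≤ n, τ_{L,j} = B(1 − γʲ)(1 − γ^{n−j}). -/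
open Finset Filter Asymptotics

noncomputable section

namespace EvoGraph

variable {V : Type*} [Fintype V] [DecidableEq V]

/-- The wheel graph with `n` leaves: hub `none`; leaves `some a` with
`a : Fin n` arranged in a cycle. Each leaf is joined to the hub and to its two
cyclically adjacent leaves by weight-1 edges; all other weights are zero. -/
def wheelW (n : ℕ) [NeZero n] : Option (Fin n) → Option (Fin n) → ℝ
  | none, some _ => 1
  | some _, none => 1
  | some a, some b => if b = a + 1 ∨ a = b + 1 then 1 else 0
  | none, none => 0

/-- `γ = (3 − √5)/2`. -/
def gam : ℝ := (3 - Real.sqrt 5) / 2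

/-- `B = 18n(1 − γ) / (3(1 + γ)(1 − γⁿ) + n(1 + γⁿ)(1 − γ))`. -/
def wheelB (n : ℕ) : ℝ :=
  18 * n * (1 - gam) /
    (3 * (1 + gam) * (1 - gam ^ n) + n * (1 + gam ^ n) * (1 - gam))

end EvoGraph

/-!
On a connected graph the coalescence system has at most one solution: the difference `δ` of
two solutions solves the homogeneous system, in which each off-diagonal `δ i j` is an average
of values at neighbouring pairs, so a maximum of `δ` propagates along edges down to the
diagonal, where `δ` vanishes. It then suffices to check that the explicit formula solves the
system on the wheel. For the leaf–leaf value `f j` at cyclic offset `j` the equations read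
`3 f (j + 1) = 3 + T + f j + f (j + 2)` with `T` the leaf–hub value; as `γ² = 3γ − 1`, they are
solved by combinations of `γʲ` and `γ^(n−j)`, and the one remaining hub equation fixes `B`.
-/

namespace EvoGraph

section Coalescence

variable {V : Type*} [Fintype V] {w : V → V → ℝ}

lemma sum_step_eq_one {i : V} (hi : deg w i ≠ 0) : ∑ k, step w i k = 1 := by
  simp only [step, ← Finset.sum_div]
  exact div_self hi

lemma sum_mul_le_of_le {ι : Type*} [Fintype ι] {p f : ι → ℝ} {M : ℝ} (hp : ∀ k, 0 ≤ p k)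
    (hp1 : ∑ k, p k = 1) (hf : ∀ k, f k ≤ M) : ∑ k, p k * f k ≤ M :=
  calc ∑ k, p k * f k ≤ ∑ k, p k * M :=
        Finset.sum_le_sum fun k _ => mul_le_mul_of_nonneg_left (hf k) (hp k)
    _ = M := by rw [← Finset.sum_mul, hp1, one_mul]

lemma eq_of_sum_mul_eq_of_le {ι : Type*} [Fintype ι] {p f : ι → ℝ} {M : ℝ} (hp : ∀ k, 0 ≤ p k)
    (hp1 : ∑ k, p k = 1) (hf : ∀ k, f k ≤ M) (h : ∑ k, p k * f k = M) {k : ι} (hk : 0 < p k) :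
    f k = M := by
  have hsum : ∑ k, p k * (M - f k) = 0 := by
    simp only [mul_sub, Finset.sum_sub_distrib, ← Finset.sum_mul, hp1, one_mul, h, sub_self]
  have hk0 := (Finset.sum_eq_zero_iff_of_nonneg fun k _ =>
    mul_nonneg (hp k) (sub_nonneg.2 (hf k))).1 hsum k (Finset.mem_univ k)
  have := (mul_eq_zero.1 hk0).resolve_left hk.ne'
  linarith

def IsCoalescentHomogeneous (w δ : V → V → ℝ) : Prop :=
  (∀ i, δ i i = 0) ∧
  ∀ i j, i ≠ j → δ i j = (1 / 2) * ∑ k, (step w i k * δ k j + step w j k * δ i k)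

lemma IsCoalescent.sub {τ τ' : V → V → ℝ} (h : IsCoalescent w τ) (h' : IsCoalescent w τ') :
    IsCoalescentHomogeneous w (τ - τ') := by
  refine ⟨fun i => by simp [h.2.1 i, h'.2.1 i], fun i j hij => ?_⟩
  simp only [Pi.sub_apply, mul_sub, Finset.sum_add_distrib, Finset.sum_sub_distrib]
  rw [h.2.2 i j hij, h'.2.2 i j hij, Finset.sum_add_distrib, Finset.sum_add_distrib]
  ring

lemma IsCoalescentHomogeneous.eq_max_of_pos (hw : ∀ i j, 0 ≤ w i j) (hdeg : ∀ i, 0 < deg w i)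
    {δ : V → V → ℝ} (hδ : IsCoalescentHomogeneous w δ)
    {M : ℝ} (hM : ∀ i j, δ i j ≤ M) {x y k : V} (hxy : x ≠ y) (hmax : δ x y = M)
    (hxk : 0 < w x k) : δ k y = M := by
  have hp : ∀ i j, 0 ≤ step w i j := fun i j => div_nonneg (hw i j) (hdeg i).le
  have hp1 : ∀ i, ∑ k, step w i k = 1 := fun i => sum_step_eq_one (hdeg i).ne'
  have hx := sum_mul_le_of_le (hp x) (hp1 x) (fun k => hM k y)
  have hy := sum_mul_le_of_le (hp y) (hp1 y) (fun k => hM x k)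
  have heq := hδ.2 x y hxy
  rw [hmax, Finset.sum_add_distrib] at heq
  exact eq_of_sum_mul_eq_of_le (hp x) (hp1 x) (fun k => hM k y) (by linarith)
    (div_pos hxk (hdeg x))

lemma IsCoalescentHomogeneous.nonpos (hw : ∀ i j, 0 ≤ w i j) (hdeg : ∀ i, 0 < deg w i)
    (hconn : ∀ i j : V, Relation.ReflTransGen (fun a b => 0 < w a b) i j)
    {δ : V → V → ℝ} (hδ : IsCoalescentHomogeneous w δ) (i j : V) : δ i j ≤ 0 := by
  have : Nonempty V := ⟨i⟩
  obtain ⟨⟨a, b⟩, hmax⟩ := Finite.exists_max fun p : V × V => δ p.1 p.2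
  have hM : ∀ x y, δ x y ≤ δ a b := fun x y => hmax (x, y)
  -- a maximum at an off-diagonal pair travels along a path to the diagonal, where `δ = 0`
  suffices ∀ x, Relation.ReflTransGen (fun a b => 0 < w a b) x b →
      δ x b = δ a b → δ a b ≤ 0 from
    (hM i j).trans (this a (hconn a b) rfl)
  intro x hx
  induction hx using Relation.ReflTransGen.head_induction_on with
  | refl => intro h; rw [← h, hδ.1]
  | @head x k hxk _ ih =>
    intro h
    by_cases hxb : x = b
    · rw [← h, hxb, hδ.1]
    · exact ih (hδ.eq_max_of_pos hw hdeg hM hxb h hxk)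

lemma IsCoalescent.unique (hw : ∀ i j, 0 ≤ w i j) (hdeg : ∀ i, 0 < deg w i)
    (hconn : ∀ i j : V, Relation.ReflTransGen (fun a b => 0 < w a b) i j)
    {τ τ' : V → V → ℝ} (h : IsCoalescent w τ) (h' : IsCoalescent w τ') : τ = τ' := by
  funext i j
  have h₁ := (h.sub h').nonpos hw hdeg hconn i j
  have h₂ := (h'.sub h).nonpos hw hdeg hconn i j
  simp only [Pi.sub_apply] at h₁ h₂
  linarith

end Coalescence

section Wheel

variable {n : ℕ} [NeZero n]

lemma fin_add_one_ne_sub_one (hn : 3 ≤ n) (a : Fin n) : a + 1 ≠ a - 1 := by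
  intro h
  have h2 : (1 : Fin n) + 1 = 0 := by
    rw [← sub_eq_zero] at h
    calc (1 : Fin n) + 1 = a + 1 - (a - 1) := by abel
      _ = 0 := h
  have := congrArg Fin.val h2
  rw [Fin.val_add, Fin.val_one', Nat.mod_eq_of_lt (by omega : 1 < n), Fin.val_zero,
    Nat.mod_eq_of_lt (by omega : 2 < n)] at this
  omega

lemma wheelW_some_some (hn : 3 ≤ n) (a b : Fin n) :
    wheelW n (some a) (some b) = (if b = a + 1 then 1 else 0) + (if b = a - 1 then 1 else 0) := by
  have hab : a = b + 1 ↔ b = a - 1 := ⟨fun h => by rw [h]; abel, fun h => by rw [h]; abel⟩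
  simp only [wheelW, hab]
  by_cases h₁ : b = a + 1 <;> by_cases h₂ : b = a - 1 <;>
    simp_all [fin_add_one_ne_sub_one hn a, (fin_add_one_ne_sub_one hn a).symm]

lemma sum_wheelW_some_some_mul (hn : 3 ≤ n) (a : Fin n) (f : Fin n → ℝ) :
    ∑ b, wheelW n (some a) (some b) * f b = f (a + 1) + f (a - 1) := by
  simp [wheelW_some_some hn, add_mul, Finset.sum_add_distrib]

lemma deg_wheelW_none : deg (wheelW n) none = n := by
  simp [deg, wheelW]

lemma deg_wheelW_some (hn : 3 ≤ n) (a : Fin n) : deg (wheelW n) (some a) = 3 := by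
  have := sum_wheelW_some_some_mul hn a 1
  simp only [Pi.one_apply, mul_one] at this
  rw [deg, Fintype.sum_option, this]
  norm_num [wheelW]

lemma sum_step_wheelW_none_mul (g : Option (Fin n) → ℝ) :
    ∑ k, step (wheelW n) none k * g k = (∑ b, g (some b)) / n := by
  simp [step, deg_wheelW_none, wheelW, Finset.sum_div, div_mul_eq_mul_div]

lemma sum_step_wheelW_some_mul (hn : 3 ≤ n) (a : Fin n) (g : Option (Fin n) → ℝ) :
    ∑ k, step (wheelW n) (some a) k * g k =
      (g none + g (some (a + 1)) + g (some (a - 1))) / 3 := by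
  simp only [step, deg_wheelW_some hn, div_mul_eq_mul_div, ← Finset.sum_div,
    Fintype.sum_option, sum_wheelW_some_some_mul hn a fun b => g (some b)]
  simp [wheelW, add_assoc]

lemma wheelW_nonneg : ∀ i j, 0 ≤ wheelW n i j := by
  rintro (_ | a) (_ | b) <;> simp only [wheelW] <;> positivity

lemma deg_wheelW_pos (hn : 3 ≤ n) : ∀ i, 0 < deg (wheelW n) i := by
  rintro (_ | a)
  · rw [deg_wheelW_none]; exact_mod_cast Nat.pos_of_neZero n
  · rw [deg_wheelW_some hn]; norm_num

lemma wheelW_connected : ∀ i j, Relation.ReflTransGen (fun a b => 0 < wheelW n a b) i j := by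
  have hub : ∀ a, Relation.ReflTransGen (fun a b => 0 < wheelW n a b) none (some a) :=
    fun a => .single (by simp [wheelW])
  have leaf : ∀ a, Relation.ReflTransGen (fun a b => 0 < wheelW n a b) (some a) none :=
    fun a => .single (by simp [wheelW])
  rintro (_ | a) (_ | b)
  exacts [.refl, hub b, leaf a, (leaf a).trans (hub b)]

end Wheel

lemma gam_pos : 0 < gam := by
  have : Real.sqrt 5 < 3 := by
    rw [Real.sqrt_lt' (by norm_num)]; norm_num
  unfold gam; linarith

lemma gam_lt_one : gam < 1 := by
  have : 1 < Real.sqrt 5 := by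
    rw [Real.lt_sqrt (by norm_num)]; norm_num
  unfold gam; linarith

lemma gam_sq : gam ^ 2 = 3 * gam - 1 := by
  unfold gam
  linear_combination (1 / 4 : ℝ) * Real.sq_sqrt (show (0 : ℝ) ≤ 5 by norm_num)

lemma wheelB_denom_pos {n : ℕ} (hn : n ≠ 0) :
    0 < 3 * (1 + gam) * (1 - gam ^ n) + n * (1 + gam ^ n) * (1 - gam) := by
  have hγn : gam ^ n < 1 := pow_lt_one₀ gam_pos.le gam_lt_one hn
  have hγ₀ := gam_pos
  have hγ₁ := gam_lt_one
  positivity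

def wheelTauLeaf (n j : ℕ) : ℝ := wheelB n * (1 - gam ^ j) * (1 - gam ^ (n - j))

def wheelTauHub (n : ℕ) : ℝ := wheelB n * (1 + gam ^ n) - 3

@[simp] lemma wheelTauLeaf_zero (n : ℕ) : wheelTauLeaf n 0 = 0 := by simp [wheelTauLeaf]

@[simp] lemma wheelTauLeaf_self (n : ℕ) : wheelTauLeaf n n = 0 := by simp [wheelTauLeaf]

lemma wheelTauLeaf_sub {n j : ℕ} (h : j ≤ n) : wheelTauLeaf n (n - j) = wheelTauLeaf n j := by
  rw [wheelTauLeaf, wheelTauLeaf, Nat.sub_sub_self h]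
  ring

lemma wheelTauLeaf_succ (k m : ℕ) :
    wheelTauLeaf (k + m + 2) (k + 1) =
      1 + (wheelTauHub (k + m + 2) + wheelTauLeaf (k + m + 2) k
        + wheelTauLeaf (k + m + 2) (k + 2)) / 3 := by
  rw [wheelTauLeaf, wheelTauLeaf, wheelTauLeaf, wheelTauHub,
    show k + m + 2 - (k + 1) = m + 1 by omega, show k + m + 2 - k = m + 2 by omega,
    show k + m + 2 - (k + 2) = m by omega]
  linear_combination (wheelB (k + m + 2) / 3) * (gam ^ k + gam ^ m) * gam_sq

lemma sum_wheelTauLeaf (n : ℕ) :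
    ∑ j ∈ range n, wheelTauLeaf n j =
      wheelB n * (n * (1 + gam ^ n) - (1 + gam) * ∑ j ∈ range n, gam ^ j) := by
  have hterm : ∀ j ∈ range n, wheelTauLeaf n j =
      wheelB n * (1 + gam ^ n) - wheelB n * gam ^ j - wheelB n * gam * gam ^ (n - 1 - j) := by
    intro j hj
    rw [mem_range] at hj
    have hpow : gam ^ (n - j) = gam * gam ^ (n - 1 - j) := by
      rw [← pow_succ']; congr 1; omega
    have hprod : gam ^ j * gam ^ (n - j) = gam ^ n := by
      rw [← pow_add]; congr 1; omega
    rw [wheelTauLeaf]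
    linear_combination wheelB n * hprod - wheelB n * hpow
  rw [Finset.sum_congr rfl hterm, Finset.sum_sub_distrib, Finset.sum_sub_distrib,
    Finset.sum_const, card_range, ← Finset.mul_sum, ← Finset.mul_sum,
    Finset.sum_range_reflect (gam ^ ·) n, nsmul_eq_mul]
  ring

lemma wheelTauHub_eq {n : ℕ} (hn : n ≠ 0) :
    wheelTauHub n =
      1 + (1 / 2) * ((∑ j ∈ range n, wheelTauLeaf n j) / n + 2 / 3 * wheelTauHub n) := by
  have hn' : (n : ℝ) ≠ 0 := by exact_mod_cast hn
  have hgeom := geom_sum_mul_neg gam n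
  have hD := (wheelB_denom_pos hn).ne'
  rw [sum_wheelTauLeaf, wheelTauHub, wheelB]
  set D := 3 * (1 + gam) * (1 - gam ^ n) + n * (1 + gam ^ n) * (1 - gam) with hD_def
  field_simp
  rw [hD_def]
  linear_combination 54 * (1 + gam) * hgeom

section WheelCandidate

variable {n : ℕ} [NeZero n]

def wheelTau (n : ℕ) [NeZero n] : Option (Fin n) → Option (Fin n) → ℝ
  | none, none => 0
  | none, some _ => wheelTauHub n
  | some _, none => wheelTauHub n
  | some a, some b => wheelTauLeaf n (b - a : Fin n)

lemma wheelTauLeaf_val_neg (c : Fin n) : wheelTauLeaf n (-c : Fin n) = wheelTauLeaf n c := by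
  rcases eq_or_ne c 0 with rfl | hc
  · simp
  · have hc' : (c : ℕ) ≠ 0 := Fin.val_ne_of_ne hc
    rw [Fin.val_neg', Nat.mod_eq_of_lt (by omega), wheelTauLeaf_sub c.isLt.le]

lemma wheelTauLeaf_val_add_one (hn : 3 ≤ n) (c : Fin n) :
    wheelTauLeaf n (c + 1 : Fin n) = wheelTauLeaf n (c + 1) := by
  rw [Fin.val_add, Fin.val_one', Nat.mod_eq_of_lt (by omega : 1 < n)]
  rcases Nat.lt_or_ge (c + 1) n with h | h
  · rw [Nat.mod_eq_of_lt h]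
  · rw [show (c : ℕ) + 1 = n by have := c.isLt; omega, Nat.mod_self, wheelTauLeaf_zero,
      wheelTauLeaf_self]

lemma sum_wheelTauLeaf_sub_left (a : Fin n) :
    ∑ b : Fin n, wheelTauLeaf n (a - b : Fin n) = ∑ j ∈ range n, wheelTauLeaf n j := by
  rw [← Fin.sum_univ_eq_sum_range]
  exact Fintype.sum_equiv (Equiv.subLeft a) _ _ fun _ => rfl

lemma sum_wheelTauLeaf_sub_right (a : Fin n) :
    ∑ b : Fin n, wheelTauLeaf n (b - a : Fin n) = ∑ j ∈ range n, wheelTauLeaf n j := by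
  rw [← Fin.sum_univ_eq_sum_range]
  exact Fintype.sum_equiv (Equiv.subRight a) _ _ fun _ => rfl

lemma wheelTau_leaf_leaf (hn : 3 ≤ n) {a b : Fin n} (hab : a ≠ b) :
    wheelTauLeaf n (b - a : Fin n) =
      1 + (1 / 2) * ((wheelTauHub n + wheelTauLeaf n (b - (a + 1) : Fin n)
          + wheelTauLeaf n (b - (a - 1) : Fin n)) / 3
        + (wheelTauHub n + wheelTauLeaf n (b + 1 - a : Fin n)
          + wheelTauLeaf n (b - 1 - a : Fin n)) / 3) := by
  set c := b - a with hc
  have hc0 : c ≠ 0 := sub_ne_zero.2 hab.symm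
  rw [show b - (a + 1) = c - 1 by rw [hc]; abel, show b - (a - 1) = c + 1 by rw [hc]; abel,
    show b + 1 - a = c + 1 by rw [hc]; abel, show b - 1 - a = c - 1 by rw [hc]; abel,
    Fin.val_sub_one_of_ne_zero hc0, wheelTauLeaf_val_add_one hn]
  obtain ⟨k, hk⟩ : ∃ k, (c : ℕ) = k + 1 :=
    Nat.exists_eq_succ_of_ne_zero (Fin.val_ne_of_ne hc0)
  obtain ⟨m, rfl⟩ : ∃ m, n = k + m + 2 := ⟨n - k - 2, by have := c.isLt; omega⟩
  rw [hk, Nat.add_sub_cancel, wheelTauLeaf_succ k m]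
  ring

lemma wheelTau_isCoalescent (hn : 3 ≤ n) : IsCoalescent (wheelW n) (wheelTau n) := by
  refine ⟨?_, ?_, ?_⟩
  · rintro (_ | a) (_ | b)
    · rfl
    · rfl
    · rfl
    · show wheelTauLeaf n (b - a : Fin n) = wheelTauLeaf n (a - b : Fin n)
      rw [← neg_sub, wheelTauLeaf_val_neg]
  · rintro (_ | a)
    · rfl
    · show wheelTauLeaf n (a - a : Fin n) = 0
      simp
  · rintro (_ | a) (_ | b) hab
    · exact absurd rfl hab
    · rw [Finset.sum_add_distrib, sum_step_wheelW_none_mul, sum_step_wheelW_some_mul hn]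
      show wheelTauHub n = 1 + 1 / 2 * ((∑ c : Fin n, wheelTauLeaf n (b - c : Fin n)) / n
        + (0 + wheelTauHub n + wheelTauHub n) / 3)
      rw [sum_wheelTauLeaf_sub_left]
      linarith [wheelTauHub_eq (n := n) (NeZero.ne n)]
    · rw [Finset.sum_add_distrib, sum_step_wheelW_none_mul, sum_step_wheelW_some_mul hn]
      show wheelTauHub n = 1 + 1 / 2 * ((0 + wheelTauHub n + wheelTauHub n) / 3
        + (∑ c : Fin n, wheelTauLeaf n (c - a : Fin n)) / n)
      rw [sum_wheelTauLeaf_sub_right]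
      linarith [wheelTauHub_eq (n := n) (NeZero.ne n)]
    · rw [Finset.sum_add_distrib, sum_step_wheelW_some_mul hn, sum_step_wheelW_some_mul hn]
      exact wheelTau_leaf_leaf hn fun h => hab (congrArg some h)

end WheelCandidate

/-- the coalescence times of the wheel graph with `n ≥ 3` leaves
satisfy `τ_{ℓH} = B(1 + γⁿ) − 3` for every leaf `ℓ`, and
`τ_{L,j} = B(1 − γʲ)(1 − γ^{n−j})` for leaves at cyclic distance `j`, `0 ≤ j ≤ n`. -/
theorem wheel_coalescence_times (n : ℕ) [NeZero n] (hn : 3 ≤ n)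
    (τ : Option (Fin n) → Option (Fin n) → ℝ)
    (hτ : IsCoalescent (wheelW n) τ) :
    (∀ ℓ : Fin n, τ (some ℓ) none = wheelB n * (1 + gam ^ n) - 3) ∧
    (∀ (a : Fin n) (j : ℕ), j ≤ n →
      τ (some a) (some (a + Fin.ofNat n j)) =
        wheelB n * (1 - gam ^ j) * (1 - gam ^ (n - j))) := by
  obtain rfl : τ = wheelTau n :=
    hτ.unique wheelW_nonneg (deg_wheelW_pos hn) wheelW_connected (wheelTau_isCoalescent hn)
  refine ⟨fun ℓ => rfl, fun a j hj => ?_⟩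
  show wheelTauLeaf n (a + Fin.ofNat n j - a : Fin n) = wheelTauLeaf n j
  rw [add_sub_cancel_left, Fin.val_ofNat]
  rcases hj.lt_or_eq with hj | rfl
  · rw [Nat.mod_eq_of_lt hj]
  · rw [Nat.mod_self, wheelTauLeaf_zero, wheelTauLeaf_self]

end EvoGraph
end
end
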